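/- arXiv:1502.02591 — 2 statements merged into one kernel-verified Lean document; each statement's English description precedes it below -/
import Mathlib

section
/- (Wielandt) Let A be a d×d complex matrix and let |A| denote the matrix of absolute values of entries of A. Suppose |A| is aperiodic with Perron eigenvalue β. Then every eigenvalue of A has modulus at most β, and A has an eigenvalue βe^{iθ} if and only if A = e^{iθ} D |A| D⁻¹ for some diagonal matrix D whose diagonal entries all have modulus 1. -/
/-!
Collatz–Wielandt: if `v > 0` and `M v = β v` for a nonnegative `M`, and `u ≥ 0` is nonzero
with `c u ≤ M u`, compare `u` with `t v`, where `t` is the largest ratio `u i / v i`: at an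
index `i` where it is attained, `c u i ≤ (M u) i ≤ t (M v) i = β u i`, so `c ≤ β`. For an
eigenvector `A x = μ x` the vector `|x|` satisfies `|μ| |x| ≤ |A| |x|`, whence `|μ| ≤ β`.

If `μ = β e^{iθ}`, then `z = t v - |x|` is nonnegative, vanishes at `i`, and `|A| z ≤ β z`;
for the strictly positive power `|A|^n`, the positive combination `(|A|^n z) i` of the
entries of `z` is at most `β^n z i = 0`, which forces `z = 0`.
So `|x| = t v` is a positive Perron vector, every row of `A x = μ x` is an equality in the
triangle inequality, and this aligns the phases: `A i j x j = |A i j| |x j| e^{iθ} x i / |x i|`,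
i.e. `A = e^{iθ} D |A| D⁻¹` with `D i = x i / |x i|`. Conversely, such an `A` has the
eigenvector `D v`.
-/

open Matrix ComplexConjugate

theorem exists_le_smul_apply_eq {ι : Type*} [Fintype ι] [Nonempty ι] {u v : ι → ℝ}
    (hv : ∀ i, 0 < v i) : ∃ t : ℝ, ∃ i, u ≤ t • v ∧ u i = t * v i := by
  obtain ⟨i, -, hi⟩ :=
    Finset.univ.exists_max_image (fun j => u j / v j) Finset.univ_nonempty
  refine ⟨u i / v i, i, fun j => ?_, (div_mul_cancel₀ _ (hv i).ne').symm⟩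
  simpa using (div_le_iff₀ (hv j)).mp (hi j (Finset.mem_univ j))

theorem Complex.eq_norm_mul_of_sum_eq_sum_norm_mul {ι : Type*} {s : Finset ι} {f : ι → ℂ}
    {ζ : ℂ} (hζ : ‖ζ‖ = 1) (h : ∑ j ∈ s, f j = (∑ j ∈ s, ‖f j‖ : ℝ) * ζ) {j : ι}
    (hj : j ∈ s) : f j = ‖f j‖ * ζ := by
  have hζζ : ζ * conj ζ = 1 := by
    rw [Complex.mul_conj, Complex.normSq_eq_norm_sq, hζ]; simp
  set g : ι → ℂ := fun k => conj ζ * f k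
  have hg : ∀ k, ‖g k‖ = ‖f k‖ := fun k => by simp [g, hζ]
  have hsum : ∑ k ∈ s, (g k).re = ∑ k ∈ s, ‖g k‖ := by
    rw [← Complex.re_sum, ← Finset.mul_sum, h, mul_left_comm, mul_comm (conj ζ), hζζ, mul_one,
      Complex.ofReal_re]
    exact Finset.sum_congr rfl fun k _ => (hg k).symm
  have hgj : (g j).re = ‖g j‖ :=
    (Finset.sum_eq_sum_iff_of_le fun k _ => Complex.re_le_norm (g k)).mp hsum j hj
  calc f j = ζ * g j := by simp only [g, ← mul_assoc, hζζ, one_mul]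
    _ = ‖f j‖ * ζ := by
      rw [Complex.eq_coe_norm_of_nonneg (Complex.re_eq_norm.mp hgj), hg, mul_comm]

theorem norm_comp_ne_zero {ι E : Type*} [NormedAddCommGroup E] {x : ι → E} (hx : x ≠ 0) :
    (‖x ·‖) ≠ 0 := fun h => hx (funext fun i => norm_eq_zero.mp (congrFun h i))

namespace Matrix

variable {ι : Type*} [Fintype ι] {M : Matrix ι ι ℝ}

theorem mulVec_mono_of_nonneg (hM : ∀ i j, 0 ≤ M i j) {u w : ι → ℝ} (h : u ≤ w) :
    M *ᵥ u ≤ M *ᵥ w := fun i =>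
  Finset.sum_le_sum fun j _ => mul_le_mul_of_nonneg_left (h j) (hM i j)

theorem pow_apply_nonneg_of_nonneg [DecidableEq ι] (hM : ∀ i j, 0 ≤ M i j) (m : ℕ) (i j : ι) :
    0 ≤ (M ^ m) i j := by
  induction m generalizing j with
  | zero => by_cases h : i = j <;> simp [h]
  | succ m ih =>
    rw [pow_succ, mul_apply]
    exact Finset.sum_nonneg fun k _ => mul_nonneg (ih k) (hM k j)

theorem pow_mulVec_le_of_mulVec_le [DecidableEq ι] (hM : ∀ i j, 0 ≤ M i j) {β : ℝ}
    (hβ : 0 ≤ β) {z : ι → ℝ} (hz : M *ᵥ z ≤ β • z) (m : ℕ) : M ^ m *ᵥ z ≤ β ^ m • z := by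
  induction m with
  | zero => simp
  | succ m ih =>
    calc M ^ (m + 1) *ᵥ z = M ^ m *ᵥ (M *ᵥ z) := by rw [pow_succ, mulVec_mulVec]
      _ ≤ M ^ m *ᵥ (β • z) := mulVec_mono_of_nonneg (pow_apply_nonneg_of_nonneg hM m) hz
      _ = β • (M ^ m *ᵥ z) := mulVec_smul _ _ _
      _ ≤ β • (β ^ m • z) := smul_le_smul_of_nonneg_left ih hβ
      _ = β ^ (m + 1) • z := by rw [smul_smul, pow_succ']

theorem nonneg_of_mulVec_eq_smul [Nonempty ι] (hM : ∀ i j, 0 ≤ M i j) {v : ι → ℝ}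
    (hv : ∀ i, 0 < v i) {β : ℝ} (hMv : M *ᵥ v = β • v) : 0 ≤ β := by
  obtain ⟨i⟩ := ‹Nonempty ι›
  have : 0 ≤ (M *ᵥ v) i := Finset.sum_nonneg fun j _ => mul_nonneg (hM i j) (hv j).le
  rw [hMv] at this
  exact nonneg_of_mul_nonneg_left this (hv i)

theorem eq_zero_of_mulVec_apply_nonpos {P : Matrix ι ι ℝ} {i : ι} (hP : ∀ j, 0 < P i j)
    {z : ι → ℝ} (hz : 0 ≤ z) (h : (P *ᵥ z) i ≤ 0) : z = 0 := by
  have hterm : ∀ j ∈ Finset.univ, 0 ≤ P i j * z j := fun j _ => mul_nonneg (hP j).le (hz j)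
  have hsum : ∑ j, P i j * z j = 0 := le_antisymm h (Finset.sum_nonneg hterm)
  funext j
  exact (mul_eq_zero.mp ((Finset.sum_eq_zero_iff_of_nonneg hterm).mp hsum j
    (Finset.mem_univ j))).resolve_left (hP j).ne'

theorem le_of_smul_le_mulVec (hM : ∀ i j, 0 ≤ M i j) {v : ι → ℝ} (hv : ∀ i, 0 < v i)
    {β : ℝ} (hMv : M *ᵥ v = β • v) {u : ι → ℝ} (hu : 0 ≤ u) (hu0 : u ≠ 0) {c : ℝ}
    (hcu : c • u ≤ M *ᵥ u) : c ≤ β := by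
  obtain ⟨k, hk⟩ := Function.ne_iff.mp hu0
  have : Nonempty ι := ⟨k⟩
  obtain ⟨t, i, hut, hi⟩ := exists_le_smul_apply_eq (u := u) hv
  have ht : 0 < t := pos_of_mul_pos_left
    (((hu k).lt_of_ne' hk).trans_le (by simpa using hut k)) (hv k).le
  have hui : 0 < u i := hi ▸ mul_pos ht (hv i)
  refine le_of_mul_le_mul_right ?_ hui
  calc c * u i ≤ (M *ᵥ u) i := hcu i
    _ ≤ (M *ᵥ (t • v)) i := mulVec_mono_of_nonneg hM hut i
    _ = β * u i := by simp [mulVec_smul, hMv, hi, mul_left_comm]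

theorem exists_eq_smul_of_smul_le_mulVec [DecidableEq ι] [Nonempty ι] (hM : ∀ i j, 0 ≤ M i j)
    {n : ℕ} (hprim : ∀ i j, 0 < (M ^ n) i j) {v : ι → ℝ} (hv : ∀ i, 0 < v i) {β : ℝ}
    (hMv : M *ᵥ v = β • v) {u : ι → ℝ} (hβu : β • u ≤ M *ᵥ u) : ∃ t : ℝ, u = t • v := by
  obtain ⟨t, i, hut, hi⟩ := exists_le_smul_apply_eq (u := u) hv
  set z := t • v - u
  have hMz : M *ᵥ z ≤ β • z := by
    rw [mulVec_sub, mulVec_smul, hMv, smul_sub, smul_comm]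
    exact sub_le_sub_left hβu _
  have hpow := pow_mulVec_le_of_mulVec_le hM (nonneg_of_mulVec_eq_smul hM hv hMv) hMz n i
  have hzi : z i = 0 := by simp [z, hi]
  have hz : z = 0 := eq_zero_of_mulVec_apply_nonpos (hprim i) (sub_nonneg.mpr hut)
    (by simpa [hzi] using hpow)
  exact ⟨t, (sub_eq_zero.mp hz).symm⟩

variable {A : Matrix ι ι ℂ}

theorem smul_norm_le_mulVec_norm (hAM : ∀ i j, M i j = ‖A i j‖) {x : ι → ℂ} {μ : ℂ}
    (hx : A *ᵥ x = μ • x) : ‖μ‖ • (‖x ·‖) ≤ M *ᵥ (‖x ·‖) := fun i =>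
  calc ‖μ‖ * ‖x i‖ = ‖(A *ᵥ x) i‖ := by simp [hx]
    _ ≤ ∑ j, ‖A i j * x j‖ := norm_sum_le _ _
    _ = (M *ᵥ (‖x ·‖)) i := by simp [mulVec, dotProduct, hAM]

theorem smul_diagonal_mul_map_mul_diagonal_apply [DecidableEq ι] (e : ℂ) (D : ι → ℂ) (i j : ι) :
    (e • (diagonal D * M.map ((↑) : ℝ → ℂ) * diagonal fun i => (D i)⁻¹)) i j =
      e * (D i * M i j * (D j)⁻¹) := by
  simp [diagonal_mul, mul_diagonal]

theorem eigenvector_apply_ne_zero_and_mulVec_norm_eq [DecidableEq ι]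
    (hAM : ∀ i j, M i j = ‖A i j‖) {n : ℕ} (hprim : ∀ i j, 0 < (M ^ n) i j) {v : ι → ℝ}
    (hv : ∀ i, 0 < v i) {β : ℝ} (hMv : M *ᵥ v = β • v) {x : ι → ℂ} (hx0 : x ≠ 0) {μ : ℂ}
    (hμ : ‖μ‖ = β) (hx : A *ᵥ x = μ • x) : (∀ i, x i ≠ 0) ∧ M *ᵥ (‖x ·‖) = β • (‖x ·‖) := by
  obtain ⟨k, -⟩ := Function.ne_iff.mp hx0
  have : Nonempty ι := ⟨k⟩
  have hM : ∀ i j, 0 ≤ M i j := fun i j => hAM i j ▸ norm_nonneg _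
  obtain ⟨t, ht⟩ := exists_eq_smul_of_smul_le_mulVec hM hprim hv hMv
    (hμ ▸ smul_norm_le_mulVec_norm hAM hx)
  have ht0 : t ≠ 0 := by rintro rfl; exact norm_comp_ne_zero hx0 (by simpa using ht)
  refine ⟨fun i hi => ?_, by rw [ht, mulVec_smul, hMv, smul_comm]⟩
  have := congrFun ht i
  simp [hi, ht0, (hv i).ne'] at this

theorem eq_smul_diagonal_mul_map_mul_diagonal [DecidableEq ι] (hAM : ∀ i j, M i j = ‖A i j‖)
    {x : ι → ℂ} (hx0 : ∀ i, x i ≠ 0) {β : ℝ} (hMx : M *ᵥ (‖x ·‖) = β • (‖x ·‖)) {e : ℂ}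
    (he : ‖e‖ = 1) (hAx : A *ᵥ x = ((β : ℂ) * e) • x) :
    A = e • (diagonal (fun i => x i / ‖x i‖) * M.map ((↑) : ℝ → ℂ) *
      diagonal fun i => (x i / ‖x i‖)⁻¹) := by
  ext i j
  rw [smul_diagonal_mul_map_mul_diagonal_apply]
  have hnorm : ∀ k, (‖x k‖ : ℂ) ≠ 0 := fun k => by simpa using hx0 k
  have hphase : ‖e * (x i / ‖x i‖)‖ = 1 := by simp [he, hx0 i]
  have hrow_sum : ∑ k, A i k * x k = β * e * x i := congrFun hAx i
  have hrow_norm : ∑ k, ‖A i k * x k‖ = β * ‖x i‖ := by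
    simpa [mulVec, dotProduct, hAM] using congrFun hMx i
  have hentry := Complex.eq_norm_mul_of_sum_eq_sum_norm_mul (s := Finset.univ)
    (f := fun k => A i k * x k) hphase
    (by rw [hrow_sum, hrow_norm]; push_cast; field_simp [hnorm i])
    (Finset.mem_univ j)
  simp only [norm_mul, ← hAM] at hentry
  push_cast at hentry ⊢
  field_simp [hnorm, hx0] at hentry ⊢
  linear_combination hentry

theorem mulVec_eq_smul_of_eq_smul_diagonal_mul_map_mul_diagonal [DecidableEq ι] {D : ι → ℂ}
    (hD : ∀ i, D i ≠ 0) {e : ℂ}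
    (hA : A = e • (diagonal D * M.map ((↑) : ℝ → ℂ) * diagonal fun i => (D i)⁻¹))
    {v : ι → ℝ} {β : ℝ} (hMv : M *ᵥ v = β • v) :
    A *ᵥ (fun i => D i * v i) = ((β : ℂ) * e) • fun i => D i * v i := by
  funext i
  have hrow : ∑ j, (M i j : ℂ) * v j = β * v i := by exact_mod_cast congrFun hMv i
  simp only [mulVec, dotProduct, hA, smul_diagonal_mul_map_mul_diagonal_apply, Pi.smul_apply,
    smul_eq_mul]
  calc ∑ j, e * (D i * M i j * (D j)⁻¹) * (D j * v j) = e * D i * ∑ j, (M i j : ℂ) * v j := by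
        rw [Finset.mul_sum]
        exact Finset.sum_congr rfl fun j _ => by field_simp [hD j]
    _ = β * e * (D i * v i) := by rw [hrow]; ring

end Matrix

theorem wielandt_general (d : ℕ) (hd : 0 < d) (A : Matrix (Fin d) (Fin d) ℂ)
    (Aabs : Matrix (Fin d) (Fin d) ℝ)
    (hAabs : ∀ i j, Aabs i j = ‖A i j‖)
    (haper : ∃ n : ℕ, 1 ≤ n ∧ ∀ i j, 0 < (Aabs ^ n) i j)
    (β : ℝ)
    (hβ : ∃ v : Fin d → ℝ, (∀ i, 0 < v i) ∧ Matrix.mulVec Aabs v = β • v) :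
    (∀ z : ℂ, (∃ x : Fin d → ℂ, x ≠ 0 ∧ Matrix.mulVec A x = z • x) → ‖z‖ ≤ β) ∧
    (∀ θ : ℝ,
      (∃ x : Fin d → ℂ, x ≠ 0 ∧
          Matrix.mulVec A x = ((β : ℂ) * Complex.exp (θ * Complex.I)) • x) ↔
      (∃ D : Fin d → ℂ, (∀ i, ‖D i‖ = 1) ∧
        A = Complex.exp (θ * Complex.I) •
          (Matrix.diagonal D * (Aabs.map fun r => (r : ℂ)) *
            Matrix.diagonal fun i => (D i)⁻¹))) := by
  obtain ⟨v, hv, hMv⟩ := hβ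
  obtain ⟨n, -, hprim⟩ := haper
  have : Nonempty (Fin d) := ⟨⟨0, hd⟩⟩
  have hM : ∀ i j, 0 ≤ Aabs i j := fun i j => hAabs i j ▸ norm_nonneg _
  have hphase (θ : ℝ) : ‖Complex.exp (θ * Complex.I)‖ = 1 := Complex.norm_exp_ofReal_mul_I θ
  refine ⟨fun z ⟨x, hx0, hx⟩ => le_of_smul_le_mulVec hM hv hMv (fun i => norm_nonneg _)
    (norm_comp_ne_zero hx0) (smul_norm_le_mulVec_norm hAabs hx), fun θ => ⟨?_, ?_⟩⟩
  · rintro ⟨x, hx0, hx⟩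
    have hμ : ‖(β : ℂ) * Complex.exp (θ * Complex.I)‖ = β := by
      rw [norm_mul, hphase, mul_one, Complex.norm_of_nonneg (nonneg_of_mulVec_eq_smul hM hv hMv)]
    obtain ⟨hx_ne, hMx⟩ :=
      eigenvector_apply_ne_zero_and_mulVec_norm_eq hAabs hprim hv hMv hx0 hμ hx
    exact ⟨_, fun i => by simp [hx_ne i],
      eq_smul_diagonal_mul_map_mul_diagonal hAabs hx_ne hMx (hphase θ) hx⟩
  · rintro ⟨D, hD, hA⟩
    have hD0 : ∀ i, D i ≠ 0 := fun i => norm_ne_zero_iff.mp (by simp [hD i])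
    refine ⟨_, fun h => ?_, mulVec_eq_smul_of_eq_smul_diagonal_mul_map_mul_diagonal hD0 hA hMv⟩
    simpa [hD0, (hv _).ne'] using congrFun h ⟨0, hd⟩

/-- Wielandt's theorem: let `A` be a complex `d×d` matrix whose entrywise absolute value
`|A|` is aperiodic with Perron eigenvalue `β` (the eigenvalue of `|A|` with a strictly
positive eigenvector).  Then every eigenvalue of `A` has modulus at most `β`, and `A`
has an eigenvalue `β·e^{iθ}` if and only if `A = e^{iθ} D |A| D⁻¹` for some diagonal
matrix `D` whose diagonal entries all have modulus one. -/
theorem wielandt (d : ℕ) (hd : 0 < d) (A : Matrix (Fin d) (Fin d) ℂ)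
    (Aabs : Matrix (Fin d) (Fin d) ℝ)
    (hAabs : ∀ i j, Aabs i j = ‖A i j‖)
    (haper : ∃ n : ℕ, 1 ≤ n ∧ ∀ i j, 0 < (Aabs ^ n) i j)
    (β : ℝ) (hβpos : 0 < β)
    (hβ : ∃ v : Fin d → ℝ, (∀ i, 0 < v i) ∧ Matrix.mulVec Aabs v = β • v) :
    (∀ z : ℂ, (∃ x : Fin d → ℂ, x ≠ 0 ∧ Matrix.mulVec A x = z • x) → ‖z‖ ≤ β) ∧
    (∀ θ : ℝ,
      (∃ x : Fin d → ℂ, x ≠ 0 ∧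
          Matrix.mulVec A x = ((β : ℂ) * Complex.exp (θ * Complex.I)) • x) ↔
      (∃ D : Fin d → ℂ, (∀ i, ‖D i‖ = 1) ∧
        A = Complex.exp (θ * Complex.I) •
          (Matrix.diagonal D * (Aabs.map fun r => (r : ℂ)) *
            Matrix.diagonal fun i => (D i)⁻¹))) :=
  wielandt_general d hd A Aabs hAabs haper β hβ
end

section
/- For a positive integer k and real d > 0, (1/2πi) ∫_{d−i∞}^{d+i∞} yˢ / (s(s+1)⋯(s+k)) ds equals 0 if 0 < y < 1, and equals (1/k!)(1 − 1/y)^k if y ≥ 1. -/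
/-! The integrand is the Mellin transform of `f(x) = (1 - x)₊ᵏ / k!`: on `Re s > 0` it is a Beta
integral, `∫₀¹ xˢ⁻¹ (1 - x)ᵏ dx = k! / (s (s+1) ⋯ (s+k))`. For `k ≥ 1` this transform decays at least
like `|s|⁻²` on the line `Re s = d`, and `f` is continuous, so Mellin inversion recovers `f(1/y)`,
which is the claimed value. -/

open Filter intervalIntegral MeasureTheory Set Complex

noncomputable def inghamKernel (k : ℕ) (x : ℝ) : ℂ :=
  ((max (1 - x) 0 ^ k / k.factorial : ℝ) : ℂ)

section InghamKernel

variable {k : ℕ}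

theorem continuous_inghamKernel (k : ℕ) : Continuous (inghamKernel k) := by
  unfold inghamKernel; fun_prop

theorem inghamKernel_inv (hk : k ≠ 0) {y : ℝ} (hy : 0 < y) :
    inghamKernel k y⁻¹ = ((if 1 ≤ y then (1 - 1 / y) ^ k / k.factorial else 0 : ℝ) : ℂ) := by
  rw [inghamKernel, one_div]
  split_ifs with h
  · rw [max_eq_left (sub_nonneg.2 (inv_le_one_of_one_le₀ h))]
  · rw [max_eq_right (sub_nonpos.2 (one_le_inv₀ hy |>.2 (not_le.1 h).le)), zero_pow hk,
      zero_div]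

theorem cpow_smul_inghamKernel (hk : k ≠ 0) (s : ℂ) {x : ℝ} (hx : 0 < x) :
    (x : ℂ) ^ (s - 1) • inghamKernel k x =
      (Ioc 0 1).indicator
        (fun x : ℝ => (x : ℂ) ^ (s - 1) * (1 - (x : ℂ)) ^ ((k + 1 : ℂ) - 1) / k.factorial) x := by
  rw [inghamKernel, smul_eq_mul]
  by_cases h1 : x ≤ 1
  · rw [indicator_of_mem (show x ∈ Ioc 0 1 from ⟨hx, h1⟩), max_eq_left (sub_nonneg.2 h1),
      add_sub_cancel_right, cpow_natCast]
    push_cast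
    ring
  · rw [indicator_of_notMem (fun h => h1 h.2), max_eq_right (by linarith), zero_pow hk]
    simp

theorem mellin_inghamKernel (hk : k ≠ 0) (s : ℂ) :
    mellin (inghamKernel k) s = betaIntegral s (k + 1) / k.factorial := by
  rw [mellin, setIntegral_congr_fun measurableSet_Ioi fun x hx => cpow_smul_inghamKernel hk s hx,
    setIntegral_indicator measurableSet_Ioc, inter_eq_self_of_subset_right Ioc_subset_Ioi_self,
    ← integral_of_le zero_le_one, intervalIntegral.integral_div, betaIntegral]

theorem mellin_inghamKernel_of_re_pos (hk : k ≠ 0) {s : ℂ} (hs : 0 < s.re) :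
    mellin (inghamKernel k) s = (∏ j ∈ Finset.range (k + 1), (s + j))⁻¹ := by
  rw [mellin_inghamKernel hk, betaIntegral_eval_nat_add_one_right hs, div_div_cancel_left']
  exact Nat.cast_ne_zero.2 k.factorial_ne_zero

theorem mellinConvergent_inghamKernel (hk : k ≠ 0) {s : ℂ} (hs : 0 < s.re) :
    MellinConvergent (inghamKernel k) s := by
  have hbeta := (betaIntegral_convergent hs (v := (k + 1 : ℂ)) (by simp; positivity)).div_const
    (k.factorial : ℂ)
  rw [intervalIntegrable_iff_integrableOn_Ioc_of_le zero_le_one,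
    ← integrable_indicator_iff measurableSet_Ioc] at hbeta
  exact hbeta.integrableOn.congr_fun (fun x hx => (cpow_smul_inghamKernel hk s hx).symm)
    measurableSet_Ioi

end InghamKernel

theorem norm_le_norm_add_natCast {s : ℂ} (hs : 0 ≤ s.re) (j : ℕ) : ‖s‖ ≤ ‖s + j‖ := by
  rw [← sq_le_sq₀ (norm_nonneg _) (norm_nonneg _), Complex.sq_norm, Complex.sq_norm, normSq_apply,
    normSq_apply]
  simp only [add_re, natCast_re, add_im, natCast_im, add_zero]
  nlinarith [j.cast_nonneg (α := ℝ)]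

theorem norm_pow_le_norm_prod_add_natCast {s : ℂ} (hs : 0 ≤ s.re) (n : ℕ) :
    ‖s‖ ^ n ≤ ‖∏ j ∈ Finset.range n, (s + j)‖ := by
  calc ‖s‖ ^ n = ∏ _j ∈ Finset.range n, ‖s‖ := by simp
    _ ≤ ∏ j ∈ Finset.range n, ‖s + j‖ :=
      Finset.prod_le_prod (fun _ _ => norm_nonneg _) fun j _ => norm_le_norm_add_natCast hs j
    _ = _ := (norm_prod _ _).symm

theorem integrable_inv_sq_add_sq {d : ℝ} (hd : d ≠ 0) :
    Integrable fun t : ℝ => (d ^ 2 + t ^ 2)⁻¹ := by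
  refine ((integrable_inv_one_add_sq.comp_div hd).const_mul (d ^ 2)⁻¹).congr
    (Eventually.of_forall fun t => ?_)
  field_simp

theorem verticalIntegrable_inv_prod_add_natCast {k : ℕ} (hk : k ≠ 0) {d : ℝ} (hd : 0 < d) :
    VerticalIntegrable (fun s => (∏ j ∈ Finset.range (k + 1), (s + j))⁻¹) d := by
  refine ((integrable_inv_sq_add_sq hd.ne').const_mul (d ^ (k - 1))⁻¹).mono'
    (by fun_prop) (Eventually.of_forall fun t => ?_)
  set s : ℂ := d + t * I
  have hre : s.re = d := by simp [s]
  have hnorm : ‖s‖ ^ 2 = d ^ 2 + t ^ 2 := by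
    rw [Complex.sq_norm, normSq_apply]
    simp [s, sq]
  have hlower : d ^ (k - 1) * (d ^ 2 + t ^ 2) ≤ ‖∏ j ∈ Finset.range (k + 1), (s + j)‖ :=
    calc d ^ (k - 1) * (d ^ 2 + t ^ 2) ≤ ‖s‖ ^ (k - 1) * ‖s‖ ^ 2 := by
          rw [hnorm]
          gcongr
          exact hre ▸ re_le_norm s
      _ = ‖s‖ ^ (k + 1) := by rw [← pow_add]; congr 1; omega
      _ ≤ _ := norm_pow_le_norm_prod_add_natCast (hre ▸ hd.le) _
  rw [norm_inv, ← mul_inv]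
  exact inv_anti₀ (by positivity) hlower

theorem tendsto_symmetric_integral_mellinInv {F : ℂ → ℂ} {σ : ℝ} (hF : VerticalIntegrable F σ)
    {x : ℝ} (hx : 0 < x) :
    Tendsto (fun R : ℝ => (2 * Real.pi * I)⁻¹ *
        ∫ t in (-R)..R, I * (x : ℂ) ^ ((σ : ℂ) + t * I) * F (σ + t * I))
      atTop (nhds (mellinInv σ F x⁻¹)) := by
  set G : ℝ → ℂ := fun t => (x : ℂ) ^ ((σ : ℂ) + t * I) * F (σ + t * I)
  have hG : Integrable G := by
    have hcont : Continuous fun t : ℝ => (x : ℂ) ^ ((σ : ℂ) + t * I) :=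
      (by fun_prop : Continuous fun t : ℝ => (σ : ℂ) + t * I).const_cpow
        (Or.inl (ofReal_ne_zero.2 hx.ne'))
    refine hF.bdd_mul (c := x ^ σ) hcont.aestronglyMeasurable (Eventually.of_forall fun t => ?_)
    simp [norm_cpow_eq_rpow_re_of_pos hx]
  have hmellinInv : mellinInv σ F x⁻¹ = (2 * Real.pi : ℂ)⁻¹ * ∫ t, G t := by
    simp only [mellinInv, ofReal_inv, inv_cpow_ofReal_nonneg hx.le, cpow_neg, inv_inv,
      smul_eq_mul, G]
    rw [real_smul]
    push_cast
    ring
  rw [hmellinInv]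
  refine ((intervalIntegral_tendsto_integral hG tendsto_neg_atTop_atBot tendsto_id).const_mul
    _).congr fun R => ?_
  simp only [id, mul_assoc, intervalIntegral.integral_const_mul, G]
  rw [← mul_assoc, ← mul_assoc]
  congr 1
  field_simp [I_ne_zero, Real.pi_ne_zero]

/-- For a positive integer `k` and real `d > 0`, the vertical line integral
`(1/2πi) ∫_{d−i∞}^{d+i∞} yˢ/(s(s+1)⋯(s+k)) ds` (a limit of integrals over
`[d−iR, d+iR]` as `R → ∞`) equals `0` if `0 < y < 1` and `(1/k!)(1−1/y)^k` if `y ≥ 1`. -/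
theorem ingham_vertical_line_integral (k : ℕ) (hk : 1 ≤ k) (d y : ℝ)
    (hd : 0 < d) (hy : 0 < y) :
    Tendsto
      (fun R : ℝ =>
        (2 * Real.pi * Complex.I)⁻¹ *
          ∫ t in (-R)..R,
            Complex.I * (y : ℂ) ^ ((d : ℂ) + t * Complex.I) /
              ∏ j ∈ Finset.range (k + 1), ((d : ℂ) + t * Complex.I + j))
      atTop
      (nhds ((if 1 ≤ y then ((1 - 1 / y) ^ k / (Nat.factorial k) : ℝ) else 0 : ℝ) : ℂ)) := by
  have hk : k ≠ 0 := Nat.one_le_iff_ne_zero.1 hk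
  have hre : ∀ t : ℝ, 0 < ((d : ℂ) + t * I).re := fun t => by simpa using hd
  have hvert : VerticalIntegrable (mellin (inghamKernel k)) d :=
    (verticalIntegrable_inv_prod_add_natCast hk hd).congr
      (Eventually.of_forall fun t => (mellin_inghamKernel_of_re_pos hk (hre t)).symm)
  have hlim := tendsto_symmetric_integral_mellinInv hvert hy
  rw [mellinInv_mellin_eq d _ (inv_pos.2 hy) (mellinConvergent_inghamKernel hk (by simpa using hd))
      hvert (continuous_inghamKernel k).continuousAt,
    inghamKernel_inv hk hy] at hlim
  refine hlim.congr fun R => ?_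
  congr 1
  refine integral_congr fun t _ => ?_
  rw [mellin_inghamKernel_of_re_pos hk (hre t), div_eq_mul_inv]
end
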